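/- Let T > 0, τ = iT, and θ₁ be the odd Jacobi theta function of modulus iT. Let N ≥ 1 and let z_1, …, z_N be complex numbers with 0 < Re z_j < 1/2 for all j. Define h(x) = ∏_{j=1}^N θ₁(x − z_j)/θ₁(x + conj(z_j)). Then for every complex x with Re x = 0 or Re x = 1/2, all factors θ₁(x − z_j) and θ₁(x + conj z_j) are nonzero and |h(x)| = 1. -/

import Mathlib

open Complex
open scoped Real

noncomputable def oddTheta (T : ℝ) (z : ℂ) : ℂ :=
  -Complex.I *
    Complex.exp ((Real.pi : ℂ) * Complex.I * (Complex.I * (T : ℂ)) / 4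
      + (Real.pi : ℂ) * Complex.I * z) *
    jacobiTheta₂ (z + (1 + Complex.I * (T : ℂ)) / 2) (Complex.I * (T : ℂ))

namespace ThetaAux


lemma jt_shift (z τ : ℂ) (k : ℤ) :
    jacobiTheta₂ (z + k * τ) τ
      = cexp (-(π:ℂ) * I * ((k:ℂ)^2 * τ + 2 * k * z)) * jacobiTheta₂ z τ := by
  conv_rhs => rw [jacobiTheta₂, ← tsum_mul_left, ← (Equiv.addRight k).tsum_eq]
  refine tsum_congr fun n => ?_
  simp_rw [jacobiTheta₂_term, ← Complex.exp_add, Equiv.coe_addRight, Int.cast_add]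
  ring_nf

lemma oddTheta_periodic (T : ℝ) (u : ℂ) : oddTheta T (u + 1) = - oddTheta T u := by
  unfold oddTheta
  rw [show u + 1 + (1 + I*(T:ℂ))/2 = (u + (1 + I*(T:ℂ))/2) + 1 by ring, jacobiTheta₂_add_left,
    show (π:ℂ)*I*(I*(T:ℂ))/4 + (π:ℂ)*I*(u+1) = ((π:ℂ)*I*(I*(T:ℂ))/4 + (π:ℂ)*I*u) + (π:ℂ)*I
      by ring,
    Complex.exp_add, Complex.exp_pi_mul_I]
  ring

lemma oddTheta_neg (T : ℝ) (u : ℂ) : oddTheta T (-u) = - oddTheta T u := by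
  unfold oddTheta
  rw [show -u + (1 + I*(T:ℂ))/2 = -(u - (1 + I*(T:ℂ))/2) by ring, jacobiTheta₂_neg_left,
    show u + (1 + I*(T:ℂ))/2 = (u - (1 + I*(T:ℂ))/2 + 1) + I*(T:ℂ) by ring,
    jacobiTheta₂_add_left', jacobiTheta₂_add_left]
  have key : cexp ((π:ℂ)*I*(I*(T:ℂ))/4 + (π:ℂ)*I*(-u))
      = -(cexp ((π:ℂ)*I*(I*(T:ℂ))/4 + (π:ℂ)*I*u)
          * cexp (-(π:ℂ)*I*(I*(T:ℂ) + 2*(u - (1 + I*(T:ℂ))/2 + 1)))) := by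
    rw [← Complex.exp_add,
      show (π:ℂ)*I*(I*(T:ℂ))/4 + (π:ℂ)*I*(-u)
        = ((π:ℂ)*I*(I*(T:ℂ))/4 + (π:ℂ)*I*u + -(π:ℂ)*I*(I*(T:ℂ) + 2*(u - (1 + I*(T:ℂ))/2 + 1)))
          + (π:ℂ)*I by ring,
      Complex.exp_add, Complex.exp_pi_mul_I, mul_neg_one]
  linear_combination (-I * jacobiTheta₂ (u - (1 + I*(T:ℂ))/2) (I*(T:ℂ))) * key

lemma oddTheta_conj (T : ℝ) (u : ℂ) :
    (starRingEnd ℂ) (oddTheta T u) = oddTheta T ((starRingEnd ℂ) u) := by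
  unfold oddTheta
  rw [map_mul, map_mul, jacobiTheta₂_conj]
  have harg : (starRingEnd ℂ) (u + (1 + I*(T:ℂ))/2)
      = (starRingEnd ℂ) u + (1 - I*(T:ℂ))/2 := by
    simp only [map_add, map_div₀, map_one, map_ofNat, Complex.conj_I, map_mul,
      Complex.conj_ofReal]
    ring
  have htau : -((starRingEnd ℂ) (I*(T:ℂ))) = I*(T:ℂ) := by
    simp [Complex.conj_I, Complex.conj_ofReal]
  rw [harg, htau,
    show (starRingEnd ℂ) u + (1 + I*(T:ℂ))/2
      = ((starRingEnd ℂ) u + (1 - I*(T:ℂ))/2) + I*(T:ℂ) by ring,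
    jacobiTheta₂_add_left']
  have hA : (starRingEnd ℂ) ((π:ℂ)*I*(I*(T:ℂ))/4 + (π:ℂ)*I*u)
      = (π:ℂ)*I*(I*(T:ℂ))/4 - (π:ℂ)*I*((starRingEnd ℂ) u) := by
    simp only [map_add, map_mul, map_div₀, map_ofNat, Complex.conj_I, Complex.conj_ofReal]
    ring
  rw [← Complex.exp_conj, hA, map_neg, Complex.conj_I]
  have key : cexp ((π:ℂ)*I*(I*(T:ℂ))/4 - (π:ℂ)*I*((starRingEnd ℂ) u))
      = -(cexp ((π:ℂ)*I*(I*(T:ℂ))/4 + (π:ℂ)*I*((starRingEnd ℂ) u))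
          * cexp (-(π:ℂ)*I*(I*(T:ℂ) + 2*((starRingEnd ℂ) u + (1 - I*(T:ℂ))/2)))) := by
    rw [← Complex.exp_add,
      show (π:ℂ)*I*(I*(T:ℂ))/4 - (π:ℂ)*I*((starRingEnd ℂ) u)
        = ((π:ℂ)*I*(I*(T:ℂ))/4 + (π:ℂ)*I*((starRingEnd ℂ) u)
            + -(π:ℂ)*I*(I*(T:ℂ) + 2*((starRingEnd ℂ) u + (1 - I*(T:ℂ))/2))) + (π:ℂ)*I by ring,
      Complex.exp_add, Complex.exp_pi_mul_I, mul_neg_one]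
  linear_combination
    (I * jacobiTheta₂ ((starRingEnd ℂ) u + (1 - I*(T:ℂ))/2) (I*(T:ℂ))) * key

lemma oddTheta_shift (T : ℝ) (u : ℂ) (k : ℤ) :
    oddTheta T (u + k * (I * T))
      = cexp (-(π:ℂ) * I * ((k:ℂ)^2 * (I*T) + 2 * k * u + k)) * oddTheta T u := by
  unfold oddTheta
  rw [show u + (k:ℂ) * (I*(T:ℂ)) + (1 + I*(T:ℂ))/2 = (u + (1 + I*(T:ℂ))/2) + (k:ℂ) * (I*(T:ℂ))
      by ring, jt_shift]
  have key : cexp ((π:ℂ)*I*(I*(T:ℂ))/4 + (π:ℂ)*I*(u + (k:ℂ)*(I*(T:ℂ))))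
        * cexp (-(π:ℂ)*I*((k:ℂ)^2*(I*(T:ℂ)) + 2*(k:ℂ)*(u + (1 + I*(T:ℂ))/2)))
      = cexp (-(π:ℂ)*I*((k:ℂ)^2*(I*(T:ℂ)) + 2*(k:ℂ)*u + (k:ℂ)))
        * cexp ((π:ℂ)*I*(I*(T:ℂ))/4 + (π:ℂ)*I*u) := by
    rw [← Complex.exp_add, ← Complex.exp_add]
    congr 1
    ring
  linear_combination (-I * jacobiTheta₂ (u + (1 + I*(T:ℂ))/2) (I*(T:ℂ))) * key

lemma abs_pow_sub_pow (a b : ℂ) (M : ℝ) (hab : a * b = 1)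
    (ha : ‖a‖ ≤ M) (hb : ‖b‖ ≤ M) (n : ℕ) :
    ‖a ^ (2*n+1) - b ^ (2*n+1)‖
      ≤ (2*n+1) * M ^ (2*n) * ‖a - b‖ := by
  have hM : 1 ≤ M := by
    have h1 : ‖a‖ * ‖b‖ = 1 := by
      rw [← norm_mul, hab, norm_one]
    nlinarith [norm_nonneg a, norm_nonneg b]
  induction n with
  | zero => simp
  | succ n ih =>
    have key : a ^ (2*(n+1)+1) - b ^ (2*(n+1)+1)
        = (a ^ (2*n+1) - b ^ (2*n+1)) + (a ^ (2*n+2) + b ^ (2*n+2)) * (a - b) := by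
      linear_combination (a ^ (2*n+1) - b ^ (2*n+1)) * hab
    have habs := norm_nonneg (a - b)
    have hpa : ‖a ^ (2*n+2)‖ ≤ M ^ (2*n+2) := by
      rw [norm_pow]; exact pow_le_pow_left₀ (norm_nonneg a) ha _
    have hpb : ‖b ^ (2*n+2)‖ ≤ M ^ (2*n+2) := by
      rw [norm_pow]; exact pow_le_pow_left₀ (norm_nonneg b) hb _
    have h2 : ‖(a ^ (2*n+2) + b ^ (2*n+2)) * (a - b)‖
        ≤ 2 * M ^ (2*n+2) * ‖a - b‖ := by
      rw [norm_mul]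
      refine mul_le_mul_of_nonneg_right ?_ habs
      calc ‖a ^ (2*n+2) + b ^ (2*n+2)‖
          ≤ ‖a ^ (2*n+2)‖ + ‖b ^ (2*n+2)‖ := norm_add_le _ _
        _ ≤ M ^ (2*n+2) + M ^ (2*n+2) := add_le_add hpa hpb
        _ = 2 * M ^ (2*n+2) := by ring
    have h3 : M ^ (2*n) ≤ M ^ (2*n+2) := pow_le_pow_right₀ hM (by omega)
    have h5 : ‖a ^ (2*n+1) - b ^ (2*n+1)‖
        ≤ (2*n+1) * M ^ (2*n+2) * ‖a - b‖ := by
      refine ih.trans ?_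
      have : ((2*n+1 : ℝ)) * M ^ (2*n) ≤ (2*n+1) * M ^ (2*n+2) := by
        have : (0:ℝ) ≤ (2*n+1 : ℝ) := by positivity
        nlinarith
      exact mul_le_mul_of_nonneg_right this habs
    rw [key]
    refine (norm_add_le _ _).trans ?_
    have heq : ((2*(n+1) : ℕ) + 1 : ℝ) * M ^ (2*(n+1)) * ‖a - b‖
        = (2*n+1) * M ^ (2*n+2) * ‖a - b‖
          + 2 * M ^ (2*n+2) * ‖a - b‖ := by
      push_cast
      ring_nf
    push_cast
    push_cast at heq h5 h2
    nlinarith [h5, h2]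

lemma pair_formula (T : ℝ) (u : ℂ) (n : ℕ) :
    (-I * cexp ((π:ℂ)*I*(I*(T:ℂ))/4 + (π:ℂ)*I*u))
        * jacobiTheta₂_term (n : ℤ) (u + (1 + I*(T:ℂ))/2) (I*(T:ℂ))
      + (-I * cexp ((π:ℂ)*I*(I*(T:ℂ))/4 + (π:ℂ)*I*u))
        * jacobiTheta₂_term (-((n : ℤ) + 1)) (u + (1 + I*(T:ℂ))/2) (I*(T:ℂ))
    = -I * cexp ((π:ℂ)*I*(n:ℂ)) * cexp ((π:ℂ)*I*(I*(T:ℂ))*((n:ℂ)+1/2)^2) *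
        (cexp ((π:ℂ)*I*u) ^ (2*n+1) - cexp (-((π:ℂ)*I*u)) ^ (2*n+1)) := by
  rw [jacobiTheta₂_term, jacobiTheta₂_term, ← Complex.exp_nat_mul, ← Complex.exp_nat_mul]
  have e1 : cexp ((π:ℂ)*I*(I*(T:ℂ))/4 + (π:ℂ)*I*u)
        * cexp (2*(π:ℂ)*I*((n:ℤ):ℂ)*(u + (1 + I*(T:ℂ))/2) + (π:ℂ)*I*((n:ℤ):ℂ)^2*(I*(T:ℂ)))
      = cexp ((π:ℂ)*I*(n:ℂ)) * cexp ((π:ℂ)*I*(I*(T:ℂ))*((n:ℂ)+1/2)^2)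
        * cexp (((2*n+1 : ℕ):ℂ) * ((π:ℂ)*I*u)) := by
    rw [← Complex.exp_add, ← Complex.exp_add, ← Complex.exp_add]
    congr 1
    push_cast
    ring
  have e2 : cexp ((π:ℂ)*I*(I*(T:ℂ))/4 + (π:ℂ)*I*u)
        * cexp (2*(π:ℂ)*I*((-((n:ℤ)+1) : ℤ):ℂ)*(u + (1 + I*(T:ℂ))/2)
            + (π:ℂ)*I*((-((n:ℤ)+1) : ℤ):ℂ)^2*(I*(T:ℂ)))
      = -(cexp ((π:ℂ)*I*(n:ℂ)) * cexp ((π:ℂ)*I*(I*(T:ℂ))*((n:ℂ)+1/2)^2)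
          * cexp (((2*n+1 : ℕ):ℂ) * (-((π:ℂ)*I*u)))) := by
    rw [← Complex.exp_add, ← Complex.exp_add, ← Complex.exp_add,
      show (π:ℂ)*I*(I*(T:ℂ))/4 + (π:ℂ)*I*u
          + (2*(π:ℂ)*I*((-((n:ℤ)+1) : ℤ):ℂ)*(u + (1 + I*(T:ℂ))/2)
            + (π:ℂ)*I*((-((n:ℤ)+1) : ℤ):ℂ)^2*(I*(T:ℂ)))
        = ((π:ℂ)*I*(n:ℂ) + (π:ℂ)*I*(I*(T:ℂ))*((n:ℂ)+1/2)^2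
            + ((2*n+1 : ℕ):ℂ) * (-((π:ℂ)*I*u)))
          + (π:ℂ)*I + ((-((n:ℤ)+1) : ℤ):ℂ) * (2*(π:ℂ)*I) by push_cast; ring,
      Complex.exp_add, Complex.exp_add, Complex.exp_int_mul_two_pi_mul_I,
      Complex.exp_pi_mul_I, mul_one, mul_neg_one]
  linear_combination (-I) * e1 + (-I) * e2


lemma pair_abs (T : ℝ) (u : ℂ) (n : ℕ) :
    ‖(-I * cexp ((π:ℂ)*I*(I*(T:ℂ))/4 + (π:ℂ)*I*u))
        * jacobiTheta₂_term (n : ℤ) (u + (1 + I*(T:ℂ))/2) (I*(T:ℂ))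
      + (-I * cexp ((π:ℂ)*I*(I*(T:ℂ))/4 + (π:ℂ)*I*u))
        * jacobiTheta₂_term (-((n : ℤ) + 1)) (u + (1 + I*(T:ℂ))/2) (I*(T:ℂ))‖
    = Real.exp (-(π*T*((n:ℝ)+1/2)^2)) *
        ‖cexp ((π:ℂ)*I*u) ^ (2*n+1) - cexp (-((π:ℂ)*I*u)) ^ (2*n+1)‖ := by
  rw [pair_formula, norm_mul, norm_mul, norm_mul, norm_neg, Complex.norm_I, one_mul,
    show (π:ℂ)*I*(n:ℂ) = ((π*(n:ℝ) : ℝ):ℂ)*I by push_cast; ring,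
    Complex.norm_exp_ofReal_mul_I, one_mul,
    show (π:ℂ)*I*(I*(T:ℂ))*((n:ℂ)+1/2)^2 = ((-(π*T*((n:ℝ)+1/2)^2) : ℝ):ℂ) by
      push_cast; linear_combination ((π:ℂ)*(T:ℂ)*((n:ℂ)+1/2)^2) * Complex.I_sq,
    Complex.norm_exp, Complex.ofReal_re]

lemma oddTheta_ne_zero_core (T : ℝ) (hT : 1 ≤ T) (u : ℂ) (hs : |u.im| ≤ T/2)
    (hu : ∀ k : ℤ, u ≠ (k:ℂ)) : oddTheta T u ≠ 0 := by
  have hT0 : (0:ℝ) < T := lt_of_lt_of_le one_pos hT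
  have him : 0 < (I*(T:ℂ)).im := by simpa using hT0
  have hsum : Summable fun n : ℤ =>
      jacobiTheta₂_term n (u + (1 + I*(T:ℂ))/2) (I*(T:ℂ)) :=
    (summable_jacobiTheta₂_term_iff _ _).mpr him
  have hg : Summable fun n : ℤ =>
      (-I * cexp ((π:ℂ)*I*(I*(T:ℂ))/4 + (π:ℂ)*I*u))
        * jacobiTheta₂_term n (u + (1 + I*(T:ℂ))/2) (I*(T:ℂ)) := hsum.mul_left _
  set F : ℕ → ℂ := fun n =>
    (-I * cexp ((π:ℂ)*I*(I*(T:ℂ))/4 + (π:ℂ)*I*u))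
        * jacobiTheta₂_term ((n:ℤ)) (u + (1 + I*(T:ℂ))/2) (I*(T:ℂ))
      + (-I * cexp ((π:ℂ)*I*(I*(T:ℂ))/4 + (π:ℂ)*I*u))
        * jacobiTheta₂_term (-((n:ℤ) + 1)) (u + (1 + I*(T:ℂ))/2) (I*(T:ℂ)) with hF
  have hFsum : Summable F := hg.nat_add_neg_add_one
  have hrepr : oddTheta T u = ∑' n : ℕ, F n := by
    rw [oddTheta, jacobiTheta₂, ← tsum_mul_left]
    exact (tsum_nat_add_neg_add_one hg).symm
  set a := cexp ((π:ℂ)*I*u) with ha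
  set b := cexp (-((π:ℂ)*I*u)) with hb
  have hab : a * b = 1 := by rw [ha, hb, ← Complex.exp_add]; simp
  have hA : 0 < ‖a - b‖ := by
    rw [norm_pos_iff, sub_ne_zero, ha, hb]
    intro h
    rw [Complex.exp_eq_exp_iff_exists_int] at h
    obtain ⟨k, hk⟩ := h
    have h2 : (2*(π:ℂ)*I) * (u - k) = 0 := by linear_combination hk
    rcases mul_eq_zero.mp h2 with h3 | h3
    · exact mul_ne_zero (mul_ne_zero two_ne_zero
        (Complex.ofReal_ne_zero.mpr Real.pi_ne_zero)) Complex.I_ne_zero h3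
    · exact hu k (sub_eq_zero.mp h3)
  -- bounds on |a| and |b|
  have hre1 : ((π:ℂ)*I*u).re = -(π * u.im) := by
    simp [Complex.mul_re, Complex.mul_im]
  have hre2 : (-((π:ℂ)*I*u)).re = π * u.im := by
    simp [Complex.mul_re, Complex.mul_im]
  have hsabs := abs_le.mp hs
  have haM : ‖a‖ ≤ Real.exp (π*T/2) := by
    rw [ha, Complex.norm_exp, hre1]
    apply Real.exp_le_exp.mpr
    nlinarith [Real.pi_pos]
  have hbM : ‖b‖ ≤ Real.exp (π*T/2) := by
    rw [hb, Complex.norm_exp, hre2]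
    apply Real.exp_le_exp.mpr
    nlinarith [Real.pi_pos]
  have hF0 : ‖F 0‖ = Real.exp (-(π*T)/4) * ‖a - b‖ := by
    simp only [hF]
    rw [pair_abs, show -(π*T*(((0:ℕ):ℝ)+1/2)^2) = -(π*T)/4 by push_cast; ring]
    norm_num [← ha, ← hb]
  have hbd : ∀ n : ℕ, ‖F (n+1)‖
      ≤ Real.exp (-(π*T)/4) * ‖a - b‖ * ((3/20) * (1/10)^n) := by
    intro n
    simp only [hF]
    rw [pair_abs, ← ha, ← hb]
    have step1 := abs_pow_sub_pow a b _ hab haM hbM (n+1)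
    push_cast at step1 ⊢
    have hE : Real.exp (-(π*T*(((n:ℝ)+1)+1/2)^2)) * (Real.exp (π*T/2) ^ (2*(n+1)))
        = Real.exp (-(π*T)/4) * Real.exp (-(π*T*((n:ℝ)+1)^2)) := by
      rw [← Real.exp_nat_mul, ← Real.exp_add, ← Real.exp_add]
      congr 1
      push_cast
      ring
    have hnum : (2*((n:ℝ)+1)+1) * Real.exp (-(π*T*((n:ℝ)+1)^2)) ≤ (3/20) * (1/10)^n := by
      have h20 : (20:ℝ) ≤ Real.exp 3 := by
        have h9 := Real.exp_one_gt_d9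
        have h3 : Real.exp 3 = Real.exp 1 ^ 3 := by
          rw [← Real.exp_nat_mul]; norm_num
        have hc : (2.7182818283:ℝ)^3 ≤ Real.exp 1 ^ 3 :=
          pow_le_pow_left₀ (by norm_num) h9.le 3
        rw [h3]
        nlinarith [hc]
      have hpge : (20:ℝ)^(n+1) ≤ Real.exp (π*T*((n:ℝ)+1)^2) := by
        calc (20:ℝ)^(n+1) ≤ (Real.exp 3)^(n+1) := pow_le_pow_left₀ (by norm_num) h20 _
          _ = Real.exp (((n+1 : ℕ) : ℝ) * 3) := (Real.exp_nat_mul 3 (n+1)).symm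
          _ ≤ Real.exp (π*T*((n:ℝ)+1)^2) := by
              apply Real.exp_le_exp.mpr
              push_cast
              have hpiT : (3:ℝ) ≤ π*T := by nlinarith [Real.pi_gt_three, Real.pi_pos]
              nlinarith [hpiT, Nat.cast_nonneg (α := ℝ) n, sq_nonneg ((n:ℝ)+1),
                mul_nonneg (Nat.cast_nonneg (α := ℝ) n) (Nat.cast_nonneg (α := ℝ) n)]
      have hexp_le : Real.exp (-(π*T*((n:ℝ)+1)^2)) ≤ (20:ℝ)⁻¹^(n+1) := by
        rw [Real.exp_neg, inv_pow]
        exact inv_anti₀ (by positivity) hpge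
      have hco : (2*((n:ℝ)+1)+1) ≤ 3 * 2^n := by
        have h : n + 1 ≤ 2^n := Nat.lt_two_pow_self
        have h' := (Nat.cast_le (α := ℝ)).mpr h
        push_cast at h'
        nlinarith [h']
      calc (2*((n:ℝ)+1)+1) * Real.exp (-(π*T*((n:ℝ)+1)^2))
          ≤ (3 * 2^n) * ((20:ℝ)⁻¹^(n+1)) := by
            apply mul_le_mul hco hexp_le (Real.exp_pos _).le (by positivity)
        _ = (3/20) * (1/10)^n := by
            rw [pow_succ, show ((20:ℝ)⁻¹) = 1/20 by norm_num,
              show (1/10 : ℝ) = 2 * (1/20) by norm_num, mul_pow]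
            ring
    calc Real.exp (-(π*T*(((n:ℝ)+1)+1/2)^2)) * ‖a^(2*(n+1)+1) - b^(2*(n+1)+1)‖
        ≤ Real.exp (-(π*T*(((n:ℝ)+1)+1/2)^2))
            * ((2*((n:ℝ)+1)+1) * Real.exp (π*T/2) ^ (2*(n+1)) * ‖a - b‖) :=
          mul_le_mul_of_nonneg_left step1 (Real.exp_pos _).le
      _ = ((2*((n:ℝ)+1)+1) * Real.exp (-(π*T*((n:ℝ)+1)^2)))
            * (Real.exp (-(π*T)/4) * ‖a - b‖) := by
          linear_combination ((2*((n:ℝ)+1)+1) * ‖a - b‖) * hE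
      _ ≤ ((3/20) * (1/10)^n) * (Real.exp (-(π*T)/4) * ‖a - b‖) :=
          mul_le_mul_of_nonneg_right hnum (by positivity)
      _ = Real.exp (-(π*T)/4) * ‖a - b‖ * ((3/20) * (1/10)^n) := by ring
  have htailsum : Summable fun n : ℕ => F (n+1) := (summable_nat_add_iff 1).mpr hFsum
  have htailnorm : Summable fun n : ℕ => ‖F (n+1)‖ := by
    apply Summable.of_nonneg_of_le (fun n => norm_nonneg _) (fun n => hbd n)
    exact ((summable_geometric_of_lt_one (by norm_num) (by norm_num)).mul_left _).mul_left _
  have htail : ‖∑' n : ℕ, F (n+1)‖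
      ≤ Real.exp (-(π*T)/4) * ‖a - b‖ * (1/6) := by
    calc ‖∑' n : ℕ, F (n+1)‖ ≤ ∑' n : ℕ, ‖F (n+1)‖ := by
          exact norm_tsum_le_tsum_norm htailnorm
      _ ≤ ∑' n : ℕ, Real.exp (-(π*T)/4) * ‖a - b‖ * ((3/20) * (1/10)^n) := by
          exact Summable.tsum_le_tsum hbd htailnorm
            (((summable_geometric_of_lt_one (by norm_num) (by norm_num)).mul_left _).mul_left _)
      _ = Real.exp (-(π*T)/4) * ‖a - b‖ * ((3/20) * (1-1/10)⁻¹) := by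
          rw [tsum_mul_left, tsum_mul_left, tsum_geometric_of_lt_one (by norm_num) (by norm_num)]
      _ ≤ Real.exp (-(π*T)/4) * ‖a - b‖ * (1/6) := by
          apply mul_le_mul_of_nonneg_left (by norm_num) (by positivity)
  have hsplit : oddTheta T u = F 0 + ∑' n : ℕ, F (n+1) := by
    rw [hrepr, Summable.tsum_eq_zero_add hFsum]
  intro h0
  have hineq : ‖F 0‖ ≤ ‖oddTheta T u‖ + ‖∑' n : ℕ, F (n+1)‖ := by
    rw [hsplit]
    simpa using norm_add_le (F 0 + ∑' n : ℕ, F (n+1)) (-(∑' n : ℕ, F (n+1)))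
  rw [h0, norm_zero, zero_add, hF0] at hineq
  have := htail
  nlinarith [Real.exp_pos (-(π*T)/4)]


lemma oddTheta_ne_zero_of_one_le (T : ℝ) (hT : 1 ≤ T) (u : ℂ)
    (hu : ∀ k m : ℤ, u ≠ (k:ℂ) + m * (I*(T:ℂ))) : oddTheta T u ≠ 0 := by
  have hT0 : (0:ℝ) < T := lt_of_lt_of_le one_pos hT
  set k : ℤ := round (u.im / T) with hk
  set u₀ : ℂ := u - k * (I*(T:ℂ)) with hu₀
  have him : u₀.im = u.im - k * T := by simp [hu₀]
  have hred : |u₀.im| ≤ T/2 := by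
    rw [him]
    have h1 : |u.im / T - k| ≤ 1/2 := abs_sub_round (u.im / T)
    have h2 : u.im - k*T = (u.im/T - k) * T := by field_simp
    rw [h2, abs_mul, abs_of_pos hT0]
    calc |u.im/T - k| * T ≤ (1/2) * T := mul_le_mul_of_nonneg_right h1 hT0.le
      _ = T/2 := by ring
  have hcore : oddTheta T u₀ ≠ 0 := by
    apply oddTheta_ne_zero_core T hT u₀ hred
    intro m hm
    exact hu m k (by rw [← hm, hu₀]; ring)
  have hshift := oddTheta_shift T u₀ k
  rw [show u₀ + (k:ℂ)*(I*(T:ℂ)) = u by rw [hu₀]; ring] at hshift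
  rw [hshift]
  exact mul_ne_zero (Complex.exp_ne_zero _) hcore

lemma oddTheta_modular (T : ℝ) (hT0 : 0 < T) (u : ℂ) :
    ∃ c : ℂ, c ≠ 0 ∧ oddTheta T u = c * oddTheta (1/T) (-I*(u+1)/(T:ℂ)) := by
  have hTc : (T:ℂ) ≠ 0 := ofReal_ne_zero.mpr (ne_of_gt hT0)
  have hIT : I*(T:ℂ) ≠ 0 := mul_ne_zero I_ne_zero hTc
  have hfe := jacobiTheta₂_functional_equation (u + (1 + I*(T:ℂ))/2) (I*(T:ℂ))
  have hneg : (-1 : ℂ)/(I*(T:ℂ)) = I * ((1/T : ℝ):ℂ) := by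
    push_cast
    rw [div_eq_iff hIT]
    field_simp
    linear_combination (-1:ℂ) * Complex.I_sq
  have harg : (u + (1 + I*(T:ℂ))/2) / (I*(T:ℂ))
      = (-I*(u+1)/(T:ℂ)) + (1 + I*((1/T : ℝ):ℂ))/2 := by
    push_cast
    rw [div_eq_iff hIT]
    field_simp
    linear_combination (1 + 2*u) * Complex.I_sq
  rw [hneg, harg] at hfe
  have hpow : ((-I*(I*(T:ℂ))) ^ ((1:ℂ)/2) : ℂ) ≠ 0 := by
    rw [Ne, Complex.cpow_eq_zero_iff]
    push_neg
    intro h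
    exfalso
    apply hTc
    have : -I*(I*(T:ℂ)) = (T:ℂ) := by
      linear_combination -(T:ℂ) * Complex.I_sq
    rw [this] at h
    exact h
  have hQ1 : (1 / (-I*(I*(T:ℂ))) ^ ((1:ℂ)/2) : ℂ) ≠ 0 := one_div_ne_zero hpow
  refine ⟨((-I * cexp ((π:ℂ)*I*(I*(T:ℂ))/4 + (π:ℂ)*I*u))
      * (1 / (-I*(I*(T:ℂ))) ^ ((1:ℂ)/2)
        * cexp (-(π:ℂ)*I*(u + (1 + I*(T:ℂ))/2)^2 / (I*(T:ℂ)))))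
      * (-I * cexp ((π:ℂ)*I*(I*((1/T:ℝ):ℂ))/4 + (π:ℂ)*I*(-I*(u+1)/(T:ℂ))))⁻¹, ?_, ?_⟩
  · refine mul_ne_zero (mul_ne_zero ?_ (mul_ne_zero hQ1 (Complex.exp_ne_zero _)))
      (inv_ne_zero ?_)
    · exact mul_ne_zero (neg_ne_zero.mpr I_ne_zero) (Complex.exp_ne_zero _)
    · exact mul_ne_zero (neg_ne_zero.mpr I_ne_zero) (Complex.exp_ne_zero _)
  · show oddTheta T u = _
    unfold oddTheta
    rw [hfe]
    have hne : (-I * cexp ((π:ℂ)*I*(I*((1/T:ℝ):ℂ))/4 + (π:ℂ)*I*(-I*(u+1)/(T:ℂ)))) ≠ 0 :=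
      mul_ne_zero (neg_ne_zero.mpr I_ne_zero) (Complex.exp_ne_zero _)
    field_simp

lemma oddTheta_ne_zero (T : ℝ) (hT0 : 0 < T) (u : ℂ)
    (hu : ∀ k m : ℤ, u ≠ (k:ℂ) + m * (I*(T:ℂ))) : oddTheta T u ≠ 0 := by
  rcases le_or_gt 1 T with hT | hT
  · exact oddTheta_ne_zero_of_one_le T hT u hu
  obtain ⟨c, hc, heq⟩ := oddTheta_modular T hT0 u
  rw [heq]
  refine mul_ne_zero hc ?_
  apply oddTheta_ne_zero_of_one_le (1/T) (by rw [le_div_iff₀ hT0]; linarith)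
  intro k m hkm
  apply hu (-m-1) k
  have hTc : (T:ℂ) ≠ 0 := ofReal_ne_zero.mpr (ne_of_gt hT0)
  push_cast at hkm ⊢
  rw [div_eq_iff hTc] at hkm
  field_simp at hkm
  linear_combination I * hkm + (u + 1 + (m:ℂ)) * Complex.I_sq

end ThetaAux

open ThetaAux in
/-- For zeros `z_j` with `0 < Re z_j < 1/2` inside the strip model of the annulus, the
theta product `h(x) = ∏ θ₁(x - z_j)/θ₁(x + conj z_j)` is well defined and unimodular on
the boundary ovals `Re x = 0` and `Re x = 1/2`. -/
theorem theta_product_disc_unimodular_on_boundary (T : ℝ) (hT : 0 < T)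
    (N : ℕ) (hN : 1 ≤ N) (z : Fin N → ℂ)
    (hz : ∀ j : Fin N, 0 < (z j).re ∧ (z j).re < 1 / 2) :
    ∀ x : ℂ, (x.re = 0 ∨ x.re = 1 / 2) →
      (∀ j : Fin N, oddTheta T (x - z j) ≠ 0 ∧
        oddTheta T (x + (starRingEnd ℂ) (z j)) ≠ 0) ∧
      ‖∏ j : Fin N,
        oddTheta T (x - z j) / oddTheta T (x + (starRingEnd ℂ) (z j))‖ = 1 := by
  intro x hx
  have hxre : (0:ℝ) ≤ x.re ∧ x.re ≤ 1/2 := by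
    rcases hx with h|h <;> rw [h] <;> norm_num
  have key : ∀ j : Fin N, oddTheta T (x - z j) ≠ 0 ∧
      oddTheta T (x + (starRingEnd ℂ) (z j)) ≠ 0 := by
    intro j
    obtain ⟨hj1, hj2⟩ := hz j
    constructor
    · apply oddTheta_ne_zero T hT
      intro k m hkm
      have hre : (x - z j).re = (k:ℝ) := by rw [hkm]; simp
      rw [Complex.sub_re] at hre
      have h0 : x.re - (z j).re ≠ 0 := by
        rcases hx with h|h <;> rw [h] <;> intro hcon <;> linarith
      have hb1 : (-1:ℝ) < (k:ℝ) := by rw [← hre]; linarith [hxre.1]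
      have hb2 : (k:ℝ) < 1 := by rw [← hre]; linarith [hxre.2]
      have hk0 : (k:ℝ) ≠ 0 := by rw [← hre]; exact h0
      have hbz : (-1:ℤ) < k ∧ k < 1 ∧ k ≠ 0 := by
        refine ⟨by exact_mod_cast hb1, by exact_mod_cast hb2, ?_⟩
        exact_mod_cast hk0
      omega
    · apply oddTheta_ne_zero T hT
      intro k m hkm
      have hre : (x + (starRingEnd ℂ) (z j)).re = (k:ℝ) := by rw [hkm]; simp
      rw [Complex.add_re, Complex.conj_re] at hre
      have hb1 : (0:ℝ) < (k:ℝ) := by rw [← hre]; linarith [hxre.1]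
      have hb2 : (k:ℝ) < 1 := by rw [← hre]; linarith [hxre.2]
      have hbz : (0:ℤ) < k ∧ k < 1 := ⟨by exact_mod_cast hb1, by exact_mod_cast hb2⟩
      omega
  have habs_eq : ∀ j : Fin N, ‖oddTheta T (x - z j)‖
      = ‖oddTheta T (x + (starRingEnd ℂ) (z j))‖ := by
    intro j
    rcases hx with h|h
    · have hcx : (starRingEnd ℂ) x = -x := by
        apply Complex.ext <;> simp [h]
      rw [← Complex.norm_conj (oddTheta T (x - z j)), oddTheta_conj, map_sub, hcx,
        show -x - (starRingEnd ℂ) (z j) = -(x + (starRingEnd ℂ) (z j)) by ring,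
        oddTheta_neg, norm_neg]
    · have hcx : (starRingEnd ℂ) x = 1 - x := by
        apply Complex.ext
        · simp only [Complex.conj_re, Complex.sub_re, Complex.one_re]
          linarith [h]
        · simp
      rw [← Complex.norm_conj (oddTheta T (x - z j)), oddTheta_conj, map_sub, hcx,
        show (1:ℂ) - x - (starRingEnd ℂ) (z j) = -(x + (starRingEnd ℂ) (z j)) + 1 by ring,
        oddTheta_periodic, norm_neg, oddTheta_neg, norm_neg]
  refine ⟨key, ?_⟩
  rw [norm_prod]
  apply Finset.prod_eq_one
  intro j _
  rw [norm_div, habs_eq j, div_self]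
  exact norm_ne_zero_iff.mpr (key j).2
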